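/- (Lemma 3.) With probability at least 1 − δ over the draw of the dataset D of n i.i.d. triples collected with the uniform policy, the following implication holds: if the empirical maximizer (π̂, ψ̂) satisfies V̂_D(π̂,ψ̂) − V̂_D(π_u,ψ̂) > V(π_u) + K·ε_D, then Δψ̂ > 0 and V(π̂) ≥ V(π⋆) − 2K·ε_D / Δψ⋆. -/

import Mathlib

/-!
Under uniform logging, `V̂_D(π,ψ) − V̂_D(π_u,ψ)` is the empirical mean of the i.i.d. variables
`(K π(a|x) − 1) ψ(y) ∈ [−1, K − 1]`. By importance weighting and Assumption 1 their mean is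
`V(π,ψ) − V(π_u,ψ) = (V(π) − V(π_u)) Δψ`, since `V(π,ψ) = V(π) Δψ + ∫ ψ dν0`. Hoeffding's
inequality and a union bound over `Π × Ψ` put all these empirical means within `K ε_D` of their
means with probability at least `1 − δ`. On that event the threshold forces
`(V(π̂) − V(π_u)) Δψ̂ > V(π_u) ≥ 0`, whence `Δψ̂ > 0` and `V(π̂) > V(π_u)`; comparing the
maximizer with `(π⋆, ψ⋆)` and using `Δψ̂ ≤ Δψ⋆` gives `(V(π⋆) − V(π̂)) Δψ⋆ < 2 K ε_D`.
-/

open MeasureTheory ENNReal Finset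

noncomputable section

namespace IGL

variable {X Y : Type*} [MeasurableSpace X] [MeasurableSpace Y] {K : ℕ}

/-- A (stochastic) policy: for each context `x`, `π x` is a probability vector over actions. -/
def IsPolicy (K : ℕ) (π : X → Fin K → ℝ) : Prop :=
  (∀ a, Measurable fun x => π x a) ∧ (∀ x a, 0 ≤ π x a) ∧ ∀ x, ∑ a, π x a = 1

/-- A reward decoder: a measurable function `ψ : Y → [0,1]`. -/
def IsDecoder (ψ : Y → ℝ) : Prop :=
  Measurable ψ ∧ ∀ y, ψ y ∈ Set.Icc (0 : ℝ) 1

/-- The uniform policy `π_u(a|x) = 1/K`. -/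
def uniformPolicy (X : Type*) (K : ℕ) : X → Fin K → ℝ := fun _ _ => (K : ℝ)⁻¹

/-- The value `V(π) = E_{x ~ d0}[∑_a π(a|x) R(x,a)]` of a policy. -/
def polValue (d0 : Measure X) (R : X → Fin K → ℝ) (π : X → Fin K → ℝ) : ℝ :=
  ∫ x, ∑ a, π x a * R x a ∂d0

/-- `Δψ = ∫ ψ dν1 - ∫ ψ dν0`. -/
def deltaPsi (ν1 ν0 : Measure Y) (ψ : Y → ℝ) : ℝ :=
  (∫ y, ψ y ∂ν1) - ∫ y, ψ y ∂ν0

/-- The decoded value `V(π,ψ) = E[ψ(y)]` under the IGL generative process: `x ~ d0`,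
`a ~ π(·|x)`, `r ~ Bernoulli(R(x,a))`, `y ~ ν1` if `r = 1`, `y ~ ν0` if `r = 0`. -/
def decValue (d0 : Measure X) (R : X → Fin K → ℝ) (ν1 ν0 : Measure Y)
    (π : X → Fin K → ℝ) (ψ : Y → ℝ) : ℝ :=
  ∫ x, ∑ a, π x a * (R x a * (∫ y, ψ y ∂ν1) + (1 - R x a) * ∫ y, ψ y ∂ν0) ∂d0

/-- Law of the feedback `y` given that the latent Bernoulli reward has mean `p`. -/
def feedback (ν1 ν0 : Measure Y) (p : ℝ) : Measure Y :=
  ENNReal.ofReal p • ν1 + ENNReal.ofReal (1 - p) • ν0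

/-- Law of one sample `(x, a, y)`: `x ~ d0`, `a ~ q(·|x)`, and `y` drawn from the IGL
generative process (Assumption 1: `y ⟂ (x,a) | r`). -/
def sampleLaw (d0 : Measure X) (q : X → Fin K → ℝ) (R : X → Fin K → ℝ)
    (ν1 ν0 : Measure Y) : Measure (X × Fin K × Y) :=
  d0.bind fun x => Measure.sum fun a : Fin K =>
    ENNReal.ofReal (q x a) • (feedback ν1 ν0 (R x a)).map fun y => (x, a, y)

/-- Law of a dataset of `n` i.i.d. samples. -/
def dataLaw (n : ℕ) (μ : Measure (X × Fin K × Y)) : Measure (Fin n → X × Fin K × Y) :=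
  Measure.pi fun _ => μ

/-- The empirical estimator for uniform-policy data:
`V̂_D(π,ψ) = (1/n) ∑_i K·π(a_i|x_i)·ψ(y_i)`. -/
def VhatU (n : ℕ) (K : ℕ) (D : Fin n → X × Fin K × Y) (π : X → Fin K → ℝ) (ψ : Y → ℝ) : ℝ :=
  (n : ℝ)⁻¹ * ∑ i, (K : ℝ) * π (D i).1 (D i).2.1 * ψ (D i).2.2

/-- The empirical estimator of the value of the uniform policy:
`V̂_D(π_u,ψ) = (1/n) ∑_i ψ(y_i)`. -/
def VhatU0 (n : ℕ) {K : ℕ} (D : Fin n → X × Fin K × Y) (ψ : Y → ℝ) : ℝ :=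
  (n : ℝ)⁻¹ * ∑ i, ψ (D i).2.2

/-- `ι := log(2|Π||Ψ|/δ)`. -/
def iotaC (NPol NDec : ℕ) (δ : ℝ) : ℝ := Real.log (2 * NPol * NDec / δ)

/-- `ε_D := √(ι/(2n))`. -/
def epsD (NPol NDec : ℕ) (δ : ℝ) (n : ℕ) : ℝ := Real.sqrt (iotaC NPol NDec δ / (2 * n))

end IGL

open ProbabilityTheory

theorem MeasureTheory.Measure.integral_bind {α β : Type*} [MeasurableSpace α] [MeasurableSpace β]
    {E : Type*} [NormedAddCommGroup E] [NormedSpace ℝ E]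
    {μ : Measure α} [SFinite μ] {κ : Kernel α β} [IsSFiniteKernel κ] {f : β → E}
    (hf : Integrable f (κ ∘ₘ μ)) : ∫ y, f y ∂(κ ∘ₘ μ) = ∫ x, ∫ y, f y ∂κ x ∂μ := by
  have hf' := hf.1
  rw [← Measure.snd_compProd, Measure.snd] at hf' ⊢
  rw [integral_map measurable_snd.aemeasurable hf', Measure.integral_compProd]
  rwa [Measure.integrable_compProd_snd_iff (by rwa [← Measure.snd_compProd])]

section Hoeffding

variable {α : Type*} [MeasurableSpace α] {μ : Measure α} [IsProbabilityMeasure μ]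
  {Z : α → ℝ} {a b : ℝ} {n : ℕ}

theorem measureReal_empiricalMean_sub_ge_le (hZ : Measurable Z) (hab : ∀ ω, Z ω ∈ Set.Icc a b)
    (hn : 0 < n) {t : ℝ} (ht : 0 ≤ t) :
    (Measure.pi fun _ : Fin n => μ).real {D | t ≤ (n : ℝ)⁻¹ * ∑ i, Z (D i) - μ[Z]}
      ≤ Real.exp (-2 * n * t ^ 2 / (b - a) ^ 2) := by
  have hn' : (0 : ℝ) < n := by exact_mod_cast hn
  have hsubG : HasSubgaussianMGF (fun ω => Z ω - μ[Z]) ((‖b - a‖₊ / 2) ^ 2) μ :=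
    hasSubgaussianMGF_of_mem_Icc hZ.aemeasurable (ae_of_all _ hab)
  have hindep : iIndepFun (fun i (D : Fin n → α) => Z (D i) - μ[Z]) (Measure.pi fun _ => μ) :=
    iIndepFun_pi (X := fun _ ω => Z ω - μ[Z]) fun _ => (hZ.sub_const _).aemeasurable
  have hsubG_eval : ∀ i ∈ (Finset.univ : Finset (Fin n)), HasSubgaussianMGF
      (fun D : Fin n → α => Z (D i) - μ[Z]) ((‖b - a‖₊ / 2) ^ 2) (Measure.pi fun _ => μ) :=
    fun i _ => HasSubgaussianMGF.of_map (measurable_pi_apply i).aemeasurable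
      (by rwa [(measurePreserving_eval (fun _ => μ) i).map_eq])
  have hevent : {D : Fin n → α | t ≤ (n : ℝ)⁻¹ * ∑ i, Z (D i) - μ[Z]}
      = {D | n * t ≤ ∑ i, (Z (D i) - μ[Z])} := by
    ext D
    simp only [Set.mem_ofPred_eq, Finset.sum_sub_distrib, Finset.sum_const, Finset.card_univ,
      Fintype.card_fin, nsmul_eq_mul, le_sub_iff_add_le, inv_mul_eq_div, le_div_iff₀ hn']
    constructor <;> intro h <;> linarith
  rw [hevent]
  refine (HasSubgaussianMGF.measure_sum_ge_le_of_iIndepFun hindep hsubG_eval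
    (by positivity)).trans_eq ?_
  congr 1
  simp only [Finset.sum_const, Finset.card_univ, Fintype.card_fin, nsmul_eq_mul]
  push_cast
  rw [Real.norm_eq_abs, div_pow, sq_abs,
    show 2 * (n * ((b - a) ^ 2 / 2 ^ 2)) = n / 2 * (b - a) ^ 2 by ring, ← div_div]
  congr 1
  field_simp

theorem measureReal_abs_empiricalMean_sub_ge_le (hZ : Measurable Z)
    (hab : ∀ ω, Z ω ∈ Set.Icc a b) (hn : 0 < n) {t : ℝ} (ht : 0 ≤ t) :
    (Measure.pi fun _ : Fin n => μ).real {D | t ≤ |(n : ℝ)⁻¹ * ∑ i, Z (D i) - μ[Z]|}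
      ≤ 2 * Real.exp (-2 * n * t ^ 2 / (b - a) ^ 2) := by
  have hupper := measureReal_empiricalMean_sub_ge_le (μ := μ) hZ hab hn ht
  have hlower := measureReal_empiricalMean_sub_ge_le (μ := μ) hZ.neg
    (fun ω => ⟨neg_le_neg (hab ω).2, neg_le_neg (hab ω).1⟩) hn ht
  rw [show -a - -b = b - a by ring] at hlower
  calc _ ≤ (Measure.pi fun _ : Fin n => μ).real
          ({D | t ≤ (n : ℝ)⁻¹ * ∑ i, Z (D i) - μ[Z]}
            ∪ {D | t ≤ (n : ℝ)⁻¹ * ∑ i, (-Z) (D i) - μ[-Z]}) := by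
        refine measureReal_mono fun D hD => ?_
        simp only [Set.mem_ofPred_eq, Set.mem_union, Pi.neg_apply, integral_neg,
          Finset.sum_neg_distrib] at hD ⊢
        rcases le_abs'.mp hD with h | h
        · right; linarith
        · left; linarith
    _ ≤ _ := (measureReal_union_le _ _).trans (by linarith)

theorem one_sub_le_measureReal_forall_abs_empiricalMean_sub_lt {ι : Type*} [Fintype ι]
    {Z : ι → α → ℝ} (hZ : ∀ j, Measurable (Z j)) (hab : ∀ j ω, Z j ω ∈ Set.Icc a b)
    (hn : 0 < n) {t : ℝ} (ht : 0 ≤ t) :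
    1 - Fintype.card ι * (2 * Real.exp (-2 * n * t ^ 2 / (b - a) ^ 2))
      ≤ (Measure.pi fun _ : Fin n => μ).real
          {D | ∀ j, |(n : ℝ)⁻¹ * ∑ i, Z j (D i) - μ[Z j]| < t} := by
  set good := {D : Fin n → α | ∀ j, |(n : ℝ)⁻¹ * ∑ i, Z j (D i) - μ[Z j]| < t}
  have hbad : goodᶜ = ⋃ j, {D | t ≤ |(n : ℝ)⁻¹ * ∑ i, Z j (D i) - μ[Z j]|} := by
    ext D
    simp [good]
  have hcover : 1 ≤ (Measure.pi fun _ : Fin n => μ).real good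
      + (Measure.pi fun _ : Fin n => μ).real goodᶜ := by
    simpa [Set.union_compl_self] using measureReal_union_le (μ := Measure.pi fun _ => μ) good goodᶜ
  have hunion : (Measure.pi fun _ : Fin n => μ).real goodᶜ
      ≤ Fintype.card ι * (2 * Real.exp (-2 * n * t ^ 2 / (b - a) ^ 2)) := by
    rw [hbad]
    refine (measureReal_iUnion_fintype_le _).trans ?_
    refine (Finset.sum_le_sum fun j _ =>
      measureReal_abs_empiricalMean_sub_ge_le (μ := μ) (hZ j) (hab j) hn ht).trans_eq ?_
    rw [Finset.sum_const, Finset.card_univ, nsmul_eq_mul]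
  linarith

end Hoeffding

namespace IGL

section

variable {X Y : Type*} {K : ℕ}

def ipsEstimate (K : ℕ) (π : X → Fin K → ℝ) (ψ : Y → ℝ) (ω : X × Fin K × Y) : ℝ :=
  K * π ω.1 ω.2.1 * ψ ω.2.2

def ipsExcess (K : ℕ) (π : X → Fin K → ℝ) (ψ : Y → ℝ) (ω : X × Fin K × Y) : ℝ :=
  ipsEstimate K π ψ ω - ψ ω.2.2

theorem VhatU_sub_VhatU0 (n : ℕ) (D : Fin n → X × Fin K × Y) (π : X → Fin K → ℝ)
    (ψ : Y → ℝ) :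
    VhatU n K D π ψ - VhatU0 n D ψ = (n : ℝ)⁻¹ * ∑ i, ipsExcess K π ψ (D i) := by
  simp only [VhatU, VhatU0, ipsExcess, ipsEstimate, ← mul_sub, ← Finset.sum_sub_distrib]

end

variable {X Y : Type*} [MeasurableSpace X] [MeasurableSpace Y] {K : ℕ}

theorem IsPolicy.le_one {π : X → Fin K → ℝ} (hπ : IsPolicy K π) (x : X) (a : Fin K) :
    π x a ≤ 1 :=
  hπ.2.2 x ▸ Finset.single_le_sum (fun b _ => hπ.2.1 x b) (Finset.mem_univ a)

theorem IsPolicy.measurable_uncurry {π : X → Fin K → ℝ} (hπ : IsPolicy K π) :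
    Measurable fun p : X × Fin K => π p.1 p.2 :=
  measurable_from_prod_countable_left hπ.1

theorem isPolicy_uniformPolicy (hK : 0 < K) : IsPolicy K (uniformPolicy X K) := by
  refine ⟨fun _ => measurable_const, fun _ _ => by simp [uniformPolicy], fun _ => ?_⟩
  simp [uniformPolicy, (Nat.cast_pos.mpr hK).ne']

theorem IsDecoder.integrable {ψ : Y → ℝ} (hψ : IsDecoder ψ) (ν : Measure Y) [IsFiniteMeasure ν] :
    Integrable ψ ν :=
  .of_mem_Icc 0 1 hψ.1.aemeasurable (ae_of_all _ hψ.2)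

theorem IsDecoder.integral_mem_Icc {ψ : Y → ℝ} (hψ : IsDecoder ψ) (ν : Measure Y)
    [IsProbabilityMeasure ν] : ∫ y, ψ y ∂ν ∈ Set.Icc (0 : ℝ) 1 :=
  ⟨integral_nonneg fun y => (hψ.2 y).1,
    (integral_mono (hψ.integrable ν) (integrable_const 1) fun y => (hψ.2 y).2).trans_eq
      (by simp)⟩

theorem neg_one_le_deltaPsi (ν1 ν0 : Measure Y) [IsProbabilityMeasure ν1]
    [IsProbabilityMeasure ν0] {ψ : Y → ℝ} (hψ : IsDecoder ψ) : -1 ≤ deltaPsi ν1 ν0 ψ := by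
  have h1 := hψ.integral_mem_Icc ν1
  have h0 := hψ.integral_mem_Icc ν0
  rw [deltaPsi]
  linarith [h1.1, h0.2]

theorem polValue_nonneg (d0 : Measure X) {R : X → Fin K → ℝ} (hR : ∀ x a, R x a ∈ Set.Icc (0 : ℝ) 1)
    {π : X → Fin K → ℝ} (hπ : IsPolicy K π) : 0 ≤ polValue d0 R π :=
  integral_nonneg fun x => Finset.sum_nonneg fun a _ => mul_nonneg (hπ.2.1 x a) (hR x a).1

section SampleLaw

variable (ν1 ν0 : Measure Y)

theorem isProbabilityMeasure_feedback [IsProbabilityMeasure ν1] [IsProbabilityMeasure ν0]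
    {p : ℝ} (hp : p ∈ Set.Icc (0 : ℝ) 1) : IsProbabilityMeasure (feedback ν1 ν0 p) := by
  constructor
  simp only [feedback, Measure.add_apply, Measure.smul_apply, measure_univ, smul_eq_mul, mul_one]
  rw [← ENNReal.ofReal_add hp.1 (by linarith [hp.2]), add_sub_cancel, ENNReal.ofReal_one]

theorem integral_feedback {ψ : Y → ℝ} (h1 : Integrable ψ ν1) (h0 : Integrable ψ ν0) {p : ℝ}
    (hp : p ∈ Set.Icc (0 : ℝ) 1) :
    ∫ y, ψ y ∂feedback ν1 ν0 p = p * (∫ y, ψ y ∂ν1) + (1 - p) * ∫ y, ψ y ∂ν0 := by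
  rw [feedback, integral_add_measure (h1.smul_measure ENNReal.ofReal_ne_top)
    (h0.smul_measure ENNReal.ofReal_ne_top), integral_smul_measure, integral_smul_measure,
    ENNReal.toReal_ofReal hp.1, ENNReal.toReal_ofReal (by linarith [hp.2]), smul_eq_mul,
    smul_eq_mul]

-- `sampleLaw d0 q R ν1 ν0` is by definition `d0.bind (sampleKernel ν1 ν0 q R)`.
def sampleKernel (q R : X → Fin K → ℝ) (x : X) : Measure (X × Fin K × Y) :=
  Measure.sum fun a : Fin K =>
    ENNReal.ofReal (q x a) • (feedback ν1 ν0 (R x a)).map fun y => (x, a, y)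

theorem measurable_sampleKernel [SFinite ν1] [SFinite ν0] {q R : X → Fin K → ℝ}
    (hq : ∀ a, Measurable fun x => q x a) (hR : ∀ a, Measurable fun x => R x a) :
    Measurable (sampleKernel ν1 ν0 q R) := by
  refine Measure.measurable_of_measurable_coe _ fun s hs => ?_
  have hsection : ∀ (ν : Measure Y) [SFinite ν] (a : Fin K),
      Measurable fun x => ν ((fun y => (x, a, y)) ⁻¹' s) := fun ν _ a =>
    measurable_measure_prodMk_left (s := (fun p : X × Y => (p.1, a, p.2)) ⁻¹' s)
      (hs.preimage (by fun_prop))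
  have hmap : ∀ (ν : Measure Y) (x : X) (a : Fin K),
      (ν.map fun y => (x, a, y)) s = ν ((fun y => (x, a, y)) ⁻¹' s) := fun _ _ _ =>
    Measure.map_apply (by fun_prop) hs
  simp only [sampleKernel, Measure.sum_apply _ hs, Measure.smul_apply, hmap, feedback,
    Measure.add_apply, smul_eq_mul, tsum_fintype]
  exact Finset.measurable_sum _ fun a _ => (hq a).ennreal_ofReal.mul
    (((hR a).ennreal_ofReal.mul (hsection ν1 a)).add
      ((measurable_const.sub (hR a)).ennreal_ofReal.mul (hsection ν0 a)))

variable [IsProbabilityMeasure ν1] [IsProbabilityMeasure ν0] {q R : X → Fin K → ℝ}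

theorem isProbabilityMeasure_sampleKernel (hq : IsPolicy K q)
    (hR : ∀ x a, R x a ∈ Set.Icc (0 : ℝ) 1) (x : X) :
    IsProbabilityMeasure (sampleKernel ν1 ν0 q R x) := by
  have (a : Fin K) : IsProbabilityMeasure ((feedback ν1 ν0 (R x a)).map fun y => (x, a, y)) :=
    have := isProbabilityMeasure_feedback ν1 ν0 (hR x a)
    Measure.isProbabilityMeasure_map (by fun_prop)
  constructor
  simp only [sampleKernel, Measure.sum_apply _ MeasurableSet.univ, Measure.smul_apply,
    measure_univ, smul_eq_mul, mul_one, tsum_fintype]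
  rw [← ENNReal.ofReal_sum_of_nonneg fun a _ => hq.2.1 x a, hq.2.2 x, ENNReal.ofReal_one]

theorem isProbabilityMeasure_sampleLaw (d0 : Measure X) [IsProbabilityMeasure d0]
    (hq : IsPolicy K q) (hRm : ∀ a, Measurable fun x => R x a)
    (hR : ∀ x a, R x a ∈ Set.Icc (0 : ℝ) 1) :
    IsProbabilityMeasure (sampleLaw d0 q R ν1 ν0) :=
  isProbabilityMeasure_bind (measurable_sampleKernel ν1 ν0 hq.1 hRm).aemeasurable
    (ae_of_all _ (isProbabilityMeasure_sampleKernel ν1 ν0 hq hR))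

theorem integral_sampleLaw (d0 : Measure X) [IsProbabilityMeasure d0] (hq : IsPolicy K q)
    (hRm : ∀ a, Measurable fun x => R x a) (hR : ∀ x a, R x a ∈ Set.Icc (0 : ℝ) 1)
    {f : X × Fin K × Y → ℝ} (hf : Measurable f) {m M : ℝ} (hfb : ∀ ω, f ω ∈ Set.Icc m M) :
    ∫ ω, f ω ∂sampleLaw d0 q R ν1 ν0
      = ∫ x, ∑ a, q x a * ∫ y, f (x, a, y) ∂feedback ν1 ν0 (R x a) ∂d0 := by
  let κ : Kernel X (X × Fin K × Y) :=
    ⟨sampleKernel ν1 ν0 q R, measurable_sampleKernel ν1 ν0 hq.1 hRm⟩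
  have : IsMarkovKernel κ :=
    ⟨isProbabilityMeasure_sampleKernel ν1 ν0 hq hR⟩
  have hint {μ : Measure (X × Fin K × Y)} [IsFiniteMeasure μ] : Integrable f μ :=
    .of_mem_Icc m M hf.aemeasurable (ae_of_all _ hfb)
  change ∫ ω, f ω ∂(κ ∘ₘ d0) = _
  rw [Measure.integral_bind hint]
  refine integral_congr_ae (ae_of_all _ fun x => ?_)
  have := isProbabilityMeasure_sampleKernel ν1 ν0 hq hR x
  have hintx : Integrable f (sampleKernel ν1 ν0 q R x) := hint
  change ∫ ω, f ω ∂sampleKernel ν1 ν0 q R x = _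
  rw [sampleKernel] at hintx ⊢
  rw [integral_sum_measure hintx, tsum_fintype]
  refine Finset.sum_congr rfl fun a _ => ?_
  rw [integral_smul_measure, integral_map (by fun_prop) hf.aestronglyMeasurable,
    ENNReal.toReal_ofReal (hq.2.1 x a), smul_eq_mul]

end SampleLaw

theorem IsPolicy.measurable_ipsEstimate {π : X → Fin K → ℝ} (hπ : IsPolicy K π)
    {ψ : Y → ℝ} (hψ : IsDecoder ψ) : Measurable (ipsEstimate K π ψ) :=
  ((hπ.measurable_uncurry.comp (measurable_fst.prodMk
    (measurable_fst.comp measurable_snd))).const_mul _).mul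
    (hψ.1.comp (measurable_snd.comp measurable_snd))

theorem IsPolicy.measurable_ipsExcess {π : X → Fin K → ℝ} (hπ : IsPolicy K π) {ψ : Y → ℝ}
    (hψ : IsDecoder ψ) : Measurable (ipsExcess K π ψ) :=
  (hπ.measurable_ipsEstimate hψ).sub (hψ.1.comp (measurable_snd.comp measurable_snd))

theorem ipsEstimate_mem_Icc {π : X → Fin K → ℝ} (hπ : IsPolicy K π) {ψ : Y → ℝ}
    (hψ : IsDecoder ψ) (ω : X × Fin K × Y) : ipsEstimate K π ψ ω ∈ Set.Icc 0 (K : ℝ) := by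
  have hp0 := hπ.2.1 ω.1 ω.2.1
  have hp1 := hπ.le_one ω.1 ω.2.1
  obtain ⟨hs0, hs1⟩ := hψ.2 ω.2.2
  unfold ipsEstimate
  exact ⟨by positivity, by nlinarith [mul_le_mul hp1 hs1 hs0 zero_le_one]⟩

theorem ipsExcess_mem_Icc (hK : 0 < K) {π : X → Fin K → ℝ} (hπ : IsPolicy K π) {ψ : Y → ℝ}
    (hψ : IsDecoder ψ) (ω : X × Fin K × Y) :
    ipsExcess K π ψ ω ∈ Set.Icc (-1 : ℝ) (K - 1) := by
  have hK' : (1 : ℝ) ≤ K := by exact_mod_cast hK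
  have hp0 := hπ.2.1 ω.1 ω.2.1
  have hp1 := hπ.le_one ω.1 ω.2.1
  obtain ⟨hs0, hs1⟩ := hψ.2 ω.2.2
  constructor <;> simp only [ipsExcess, ipsEstimate] <;>
    nlinarith [mul_nonneg hp0 hs0, mul_nonneg (sub_nonneg.2 hp1) hs0]

theorem decValue_eq (ν1 ν0 : Measure Y) (d0 : Measure X) [IsProbabilityMeasure d0]
    {R π : X → Fin K → ℝ} (ψ : Y → ℝ) (hRm : ∀ a, Measurable fun x => R x a)
    (hR : ∀ x a, R x a ∈ Set.Icc (0 : ℝ) 1) (hπ : IsPolicy K π) :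
    decValue d0 R ν1 ν0 π ψ = polValue d0 R π * deltaPsi ν1 ν0 ψ + ∫ y, ψ y ∂ν0 := by
  have hint : Integrable (fun x => ∑ a, π x a * R x a) d0 :=
    .of_mem_Icc 0 1 (Finset.measurable_sum _ fun a _ => (hπ.1 a).mul (hRm a)).aemeasurable
      (ae_of_all _ fun x => ⟨Finset.sum_nonneg fun a _ => mul_nonneg (hπ.2.1 x a) (hR x a).1,
        (Finset.sum_le_sum fun a _ => mul_le_of_le_one_right (hπ.2.1 x a) (hR x a).2).trans_eq
          (hπ.2.2 x)⟩)
  have hpoint (x : X) : ∑ a, π x a * (R x a * (∫ y, ψ y ∂ν1) + (1 - R x a) * ∫ y, ψ y ∂ν0)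
      = (∑ a, π x a * R x a) * deltaPsi ν1 ν0 ψ + ∫ y, ψ y ∂ν0 := by
    calc _ = ∑ a, (π x a * R x a * deltaPsi ν1 ν0 ψ + π x a * ∫ y, ψ y ∂ν0) :=
          Finset.sum_congr rfl fun a _ => by rw [deltaPsi]; ring
      _ = _ := by rw [Finset.sum_add_distrib, ← Finset.sum_mul, ← Finset.sum_mul, hπ.2.2 x, one_mul]
  rw [decValue, integral_congr_ae (ae_of_all _ hpoint), integral_add (hint.mul_const _)
    (integrable_const _), integral_mul_const, integral_const, polValue]
  simp

section Values

variable (ν1 ν0 : Measure Y) [IsProbabilityMeasure ν1] [IsProbabilityMeasure ν0]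
  (d0 : Measure X) [IsProbabilityMeasure d0] {R : X → Fin K → ℝ} {π : X → Fin K → ℝ}
  {ψ : Y → ℝ}

theorem integral_ipsEstimate (hK : 0 < K)
    (hRm : ∀ a, Measurable fun x => R x a) (hR : ∀ x a, R x a ∈ Set.Icc (0 : ℝ) 1)
    (hπ : IsPolicy K π) (hψ : IsDecoder ψ) :
    ∫ ω, ipsEstimate K π ψ ω ∂sampleLaw d0 (uniformPolicy X K) R ν1 ν0
      = decValue d0 R ν1 ν0 π ψ := by
  rw [integral_sampleLaw ν1 ν0 d0 (isPolicy_uniformPolicy hK) hRm hR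
    (hπ.measurable_ipsEstimate hψ) (ipsEstimate_mem_Icc hπ hψ), decValue]
  refine integral_congr_ae (ae_of_all _ fun x => Finset.sum_congr rfl fun a _ => ?_)
  simp only [ipsEstimate]
  rw [integral_const_mul, integral_feedback ν1 ν0 (hψ.integrable ν1) (hψ.integrable ν0) (hR x a),
    uniformPolicy]
  field_simp

theorem integral_ipsExcess (hK : 0 < K) (hRm : ∀ a, Measurable fun x => R x a)
    (hR : ∀ x a, R x a ∈ Set.Icc (0 : ℝ) 1) (hπ : IsPolicy K π) (hψ : IsDecoder ψ) :
    ∫ ω, ipsExcess K π ψ ω ∂sampleLaw d0 (uniformPolicy X K) R ν1 ν0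
      = (polValue d0 R π - polValue d0 R (uniformPolicy X K)) * deltaPsi ν1 ν0 ψ := by
  have hu := isPolicy_uniformPolicy (X := X) hK
  have := isProbabilityMeasure_sampleLaw ν1 ν0 d0 hu hRm hR
  have hint {π' : X → Fin K → ℝ} (hπ' : IsPolicy K π') :
      Integrable (ipsEstimate K π' ψ) (sampleLaw d0 (uniformPolicy X K) R ν1 ν0) :=
    .of_mem_Icc 0 K (hπ'.measurable_ipsEstimate hψ).aemeasurable
      (ae_of_all _ (ipsEstimate_mem_Icc hπ' hψ))
  have hsplit (ω : X × Fin K × Y) :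
      ipsExcess K π ψ ω = ipsEstimate K π ψ ω - ipsEstimate K (uniformPolicy X K) ψ ω := by
    simp [ipsExcess, ipsEstimate, uniformPolicy, (Nat.cast_pos.mpr hK).ne']
  rw [integral_congr_ae (ae_of_all _ hsplit), integral_sub (hint hπ) (hint hu),
    integral_ipsEstimate ν1 ν0 d0 hK hRm hR hπ hψ, integral_ipsEstimate ν1 ν0 d0 hK hRm hR hu hψ,
    decValue_eq ν1 ν0 d0 ψ hRm hR hπ, decValue_eq ν1 ν0 d0 ψ hRm hR hu]
  ring

end Values

theorem exploitation_of_forall_abs_sub_lt {ι κ : Type*} {V : ι → ℝ} {Δ : κ → ℝ} {Vu η : ℝ}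
    {W : ι → κ → ℝ} (hdev : ∀ i j, |W i j - (V i - Vu) * Δ j| < η) (hV : ∀ i, 0 ≤ V i)
    (hVu : 0 ≤ Vu) (hΔ : ∀ j, -1 ≤ Δ j) {jstar : κ} (hjstar : ∀ j, Δ j ≤ Δ jstar)
    {ihat : ι} {jhat : κ} (hmax : ∀ i j, W i j ≤ W ihat jhat) (hbig : Vu + η < W ihat jhat)
    (istar : ι) : 0 < Δ jhat ∧ V istar - 2 * η / Δ jstar ≤ V ihat := by
  have hup := (abs_lt.mp (hdev ihat jhat)).2
  have hlow := (abs_lt.mp (hdev istar jstar)).1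
  have hgap : Vu < (V ihat - Vu) * Δ jhat := by linarith
  have hΔpos : 0 < Δ jhat := by
    by_contra! hΔneg
    nlinarith [hV ihat, hΔ jhat]
  have hVpos : 0 < V ihat - Vu := pos_of_mul_pos_left (hVu.trans_lt hgap) hΔpos.le
  have hΔstar : 0 < Δ jstar := hΔpos.trans_le (hjstar jhat)
  have hregret : (V istar - V ihat) * Δ jstar < 2 * η := by
    nlinarith [hmax istar jstar, mul_le_mul_of_nonneg_left (hjstar jhat) hVpos.le]
  refine ⟨hΔpos, ?_⟩
  rw [sub_le_iff_le_add, ← sub_le_iff_le_add', le_div_iff₀ hΔstar]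
  exact hregret.le

theorem card_mul_two_mul_exp_neg_epsD_le {NPol NDec n : ℕ} (hPol : 0 < NPol) (hDec : 0 < NDec)
    (hn : 0 < n) {δ : ℝ} (hδ : 0 < δ) :
    (NPol * NDec : ℝ) * (2 * Real.exp (-2 * n * epsD NPol NDec δ n ^ 2)) ≤ δ := by
  have hPol' : (0 : ℝ) < NPol := by exact_mod_cast hPol
  have hDec' : (0 : ℝ) < NDec := by exact_mod_cast hDec
  have hn' : (0 : ℝ) < n := by exact_mod_cast hn
  have hiota : iotaC NPol NDec δ ≤ 2 * n * epsD NPol NDec δ n ^ 2 := by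
    rw [epsD, Real.sq_sqrt', ← div_le_iff₀' (by positivity)]
    exact le_max_left _ _
  calc (NPol * NDec : ℝ) * (2 * Real.exp (-2 * n * epsD NPol NDec δ n ^ 2))
      ≤ NPol * NDec * (2 * Real.exp (-iotaC NPol NDec δ)) := by gcongr; linarith
    _ = δ := by
      rw [iotaC, Real.exp_neg, Real.exp_log (by positivity)]
      field_simp

theorem igl_lemma3_exploitation_guarantee_general
    (hK : 0 < K)
    (d0 : Measure X) [IsProbabilityMeasure d0]
    (ν1 ν0 : Measure Y) [IsProbabilityMeasure ν1] [IsProbabilityMeasure ν0]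
    (R : X → Fin K → ℝ) (hRmeas : ∀ a, Measurable fun x => R x a)
    (hR : ∀ x a, R x a ∈ Set.Icc (0 : ℝ) 1)
    {ιPol ιDec : Type*} [Fintype ιPol] [Fintype ιDec] [Nonempty ιPol] [Nonempty ιDec]
    (P : ιPol → X → Fin K → ℝ) (hP : ∀ i, IsPolicy K (P i))
    (Ψc : ιDec → Y → ℝ) (hΨ : ∀ j, IsDecoder (Ψc j))
    -- `π⋆` and `ψ⋆`
    (istar : ιPol)
    (jstar : ιDec) (hjstar : ∀ j, deltaPsi ν1 ν0 (Ψc j) ≤ deltaPsi ν1 ν0 (Ψc jstar))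
    (n : ℕ) (hn : 0 < n) (δ : ℝ) (hδ : 0 < δ) :
    ENNReal.ofReal (1 - δ) ≤
      dataLaw n (sampleLaw d0 (uniformPolicy X K) R ν1 ν0)
        {D | ∀ (ihat : ιPol) (jhat : ιDec),
          (∀ (i : ιPol) (j : ιDec),
            VhatU n K D (P i) (Ψc j) - VhatU0 n D (Ψc j)
              ≤ VhatU n K D (P ihat) (Ψc jhat) - VhatU0 n D (Ψc jhat)) →
          VhatU n K D (P ihat) (Ψc jhat) - VhatU0 n D (Ψc jhat)
              > polValue d0 R (uniformPolicy X K)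
                + K * epsD (Fintype.card ιPol) (Fintype.card ιDec) δ n →
          0 < deltaPsi ν1 ν0 (Ψc jhat) ∧
            polValue d0 R (P ihat)
              ≥ polValue d0 R (P istar)
                - 2 * K * epsD (Fintype.card ιPol) (Fintype.card ιDec) δ n
                    / deltaPsi ν1 ν0 (Ψc jstar)} := by
  have hK' : (0 : ℝ) < K := by exact_mod_cast hK
  have hu := isPolicy_uniformPolicy (X := X) hK
  have := isProbabilityMeasure_sampleLaw ν1 ν0 d0 hu hRmeas hR
  set ε := epsD (Fintype.card ιPol) (Fintype.card ιDec) δ n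
  have hgood := one_sub_le_measureReal_forall_abs_empiricalMean_sub_lt
    (μ := sampleLaw d0 (uniformPolicy X K) R ν1 ν0)
    (Z := fun ij : ιPol × ιDec => ipsExcess K (P ij.1) (Ψc ij.2))
    (fun ij => (hP ij.1).measurable_ipsExcess (hΨ ij.2))
    (fun ij => ipsExcess_mem_Icc hK (hP ij.1) (hΨ ij.2)) hn (t := K * ε)
    (mul_nonneg hK'.le (Real.sqrt_nonneg _))
  have hconf : (Fintype.card (ιPol × ιDec) : ℝ)
      * (2 * Real.exp (-2 * n * (K * ε) ^ 2 / (K - 1 - -1) ^ 2)) ≤ δ := by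
    rw [Fintype.card_prod, Nat.cast_mul,
      show -2 * n * (K * ε) ^ 2 / (K - 1 - -1) ^ 2 = -2 * n * ε ^ 2 by
        rw [sub_neg_eq_add, sub_add_cancel]; field_simp]
    exact card_mul_two_mul_exp_neg_epsD_le Fintype.card_pos Fintype.card_pos hn hδ
  refine ENNReal.ofReal_le_of_le_toReal ((hgood.trans' (by linarith)).trans
    (measureReal_mono fun D hD => ?_))
  intro ihat jhat hmax hbig
  have hdev (i : ιPol) (j : ιDec) : |VhatU n K D (P i) (Ψc j) - VhatU0 n D (Ψc j)
      - (polValue d0 R (P i) - polValue d0 R (uniformPolicy X K)) * deltaPsi ν1 ν0 (Ψc j)|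
        < K * ε := by
    rw [VhatU_sub_VhatU0, ← integral_ipsExcess ν1 ν0 d0 hK hRmeas hR (hP i) (hΨ j)]
    exact hD (i, j)
  obtain ⟨hΔpos, hregret⟩ := exploitation_of_forall_abs_sub_lt hdev
    (fun i => polValue_nonneg d0 hR (hP i)) (polValue_nonneg d0 hR hu)
    (fun j => neg_one_le_deltaPsi ν1 ν0 (hΨ j)) hjstar hmax hbig istar
  exact ⟨hΔpos, by rwa [mul_assoc]⟩

/-- **Lemma 3.** With probability at least `1 − δ` over the draw of the
dataset `D` of `n` i.i.d. triples collected with the uniform policy, the following holds: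
if the empirical maximizer `(π̂, ψ̂)` satisfies
`V̂_D(π̂,ψ̂) − V̂_D(π_u,ψ̂) > V(π_u) + K·ε_D`, then `Δψ̂ > 0` and
`V(π̂) ≥ V(π⋆) − 2K·ε_D / Δψ⋆`. -/
theorem igl_lemma3_exploitation_guarantee
    (hK : 0 < K)
    (d0 : Measure X) [IsProbabilityMeasure d0]
    (ν1 ν0 : Measure Y) [IsProbabilityMeasure ν1] [IsProbabilityMeasure ν0]
    (R : X → Fin K → ℝ) (hRmeas : ∀ a, Measurable fun x => R x a)
    (hR : ∀ x a, R x a ∈ Set.Icc (0 : ℝ) 1)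
    {ιPol ιDec : Type*} [Fintype ιPol] [Fintype ιDec] [Nonempty ιPol] [Nonempty ιDec]
    (P : ιPol → X → Fin K → ℝ) (hP : ∀ i, IsPolicy K (P i))
    (Ψc : ιDec → Y → ℝ) (hΨ : ∀ j, IsDecoder (Ψc j))
    -- `π⋆` and `ψ⋆`
    (istar : ιPol) (histar : ∀ i, polValue d0 R (P i) ≤ polValue d0 R (P istar))
    (jstar : ιDec) (hjstar : ∀ j, deltaPsi ν1 ν0 (Ψc j) ≤ deltaPsi ν1 ν0 (Ψc jstar))
    (n : ℕ) (hn : 0 < n) (δ : ℝ) (hδ : 0 < δ) (hδ1 : δ < 1) :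
    ENNReal.ofReal (1 - δ) ≤
      dataLaw n (sampleLaw d0 (uniformPolicy X K) R ν1 ν0)
        {D | ∀ (ihat : ιPol) (jhat : ιDec),
          (∀ (i : ιPol) (j : ιDec),
            VhatU n K D (P i) (Ψc j) - VhatU0 n D (Ψc j)
              ≤ VhatU n K D (P ihat) (Ψc jhat) - VhatU0 n D (Ψc jhat)) →
          VhatU n K D (P ihat) (Ψc jhat) - VhatU0 n D (Ψc jhat)
              > polValue d0 R (uniformPolicy X K)
                + K * epsD (Fintype.card ιPol) (Fintype.card ιDec) δ n →
          0 < deltaPsi ν1 ν0 (Ψc jhat) ∧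
            polValue d0 R (P ihat)
              ≥ polValue d0 R (P istar)
                - 2 * K * epsD (Fintype.card ιPol) (Fintype.card ιDec) δ n
                    / deltaPsi ν1 ν0 (Ψc jstar)} :=
  igl_lemma3_exploitation_guarantee_general hK d0 ν1 ν0 R hRmeas hR P hP Ψc hΨ istar jstar hjstar n
    hn δ hδ

end IGL
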